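/- arXiv:2509.05827 — 2 statements merged into one kernel-verified Lean document; each statement's English description precedes it below -/
import Mathlib

section
/- If a word S is s-primitive over an alphabet of size k and |S| > γ(k-1), then every factor of S of length γ(k-1)+1 contains at least k different letters. -/
/-- `C` is an s-cover of `S`: `C` occurs in `S` as a subsequence, and every
position of `S` belongs to some occurrence of `C` as a subsequence, i.e. a
strictly increasing list of positions of `S` spelling `C`. -/
def IsSCover {α : Type*} (C S : List α) : Prop :=
  C.Sublist S ∧
    ∀ i : Fin S.length, ∃ I : List (Fin S.length),
      I.Chain' (fun a b => (a : ℕ) < (b : ℕ)) ∧ i ∈ I ∧ I.map S.get = C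

/-- A word is s-primitive if it has no s-cover strictly shorter than itself. -/
def SPrimitive {α : Type*} (S : List α) : Prop :=
  ∀ C : List α, IsSCover C S → S.length ≤ C.length

/-- `γ k` is the maximum length of an s-primitive word over an alphabet of size `k`
(words over `ℕ` using at most `k` distinct letters). -/
def GammaSpec (γ : ℕ → ℕ) : Prop :=
  ∀ k : ℕ,
    IsGreatest {n : ℕ | ∃ S : List ℕ, S.toFinset.card ≤ k ∧ SPrimitive S ∧ S.length = n} (γ k)

/-!
A factor `U` of `S` with fewer than `k` letters and length `γ (k - 1) + 1` cannot be s-primitive,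
so it has a shorter s-cover `C`. Occurrences of s-covers concatenate, hence `P ++ C ++ Q` is an
s-cover of `S = P ++ U ++ Q` shorter than `S`, contradicting the s-primitivity of `S`.
-/

variable {α : Type*}

def IsOccurrence (C S : List α) (I : List (Fin S.length)) : Prop :=
  I.IsChain (· < ·) ∧ I.map S.get = C

theorem isSCover_iff {C S : List α} :
    IsSCover C S ↔ C.Sublist S ∧ ∀ i : Fin S.length, ∃ I, IsOccurrence C S I ∧ i ∈ I := by
  -- `IsSCover` states the chain condition on `I` coerced to `List ℕ` through the list monad.
  have coe_eq (I : List (Fin S.length)) : (do let a ← I; pure (a : ℕ)) = I.map Fin.val := by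
    simp [← List.map_eq_flatMap]
  simp only [IsSCover, IsOccurrence, coe_eq, List.Chain', List.isChain_map]
  exact and_congr_right' <| forall_congr' fun _ => exists_congr fun _ => by tauto

theorem List.Sublist.exists_isOccurrence {C S : List α} (h : C.Sublist S) :
    ∃ I, IsOccurrence C S I := by
  obtain ⟨f, hf⟩ := List.sublist_iff_exists_fin_orderEmbedding_get_eq.mp h
  refine ⟨(List.finRange C.length).map f, ?_, ?_⟩
  · exact (List.isChain_map f).2 <|
      (List.pairwise_lt_finRange _).isChain.imp fun _ _ h => f.strictMono h
  · simp only [List.map_map]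
    conv_rhs => rw [← List.map_get_finRange C]
    exact List.map_congr_left fun i _ => (hf i).symm

def List.appendIdxLeft (U V : List α) (i : Fin U.length) : Fin (U ++ V).length :=
  ⟨i, by simp; omega⟩

def List.appendIdxRight (U V : List α) (j : Fin V.length) : Fin (U ++ V).length :=
  ⟨U.length + j, by simp⟩

theorem IsOccurrence.append {C D U V : List α} {I : List (Fin U.length)}
    {J : List (Fin V.length)} (hI : IsOccurrence C U I) (hJ : IsOccurrence D V J) :
    IsOccurrence (C ++ D) (U ++ V) (I.map (U.appendIdxLeft V) ++ J.map (U.appendIdxRight V)) := by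
  obtain ⟨hIc, rfl⟩ := hI
  obtain ⟨hJc, rfl⟩ := hJ
  refine ⟨List.IsChain.append ?_ ?_ ?_, ?_⟩
  · exact (List.isChain_map _).2 hIc
  · exact (List.isChain_map _).2 (hJc.imp fun a b h => by simpa [List.appendIdxRight] using h)
  · intro x hx y hy
    obtain ⟨i, -, rfl⟩ := List.mem_map.1 (List.mem_of_getLast? hx)
    obtain ⟨j, -, rfl⟩ := List.mem_map.1 (List.mem_of_mem_head? hy)
    simp only [List.appendIdxLeft, List.appendIdxRight, Fin.mk_lt_mk]
    omega
  · simp only [List.map_append, List.map_map]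
    congr 1 <;> refine List.map_congr_left fun i _ => ?_
    · simp [List.appendIdxLeft, List.getElem_append_left]
    · simp [List.appendIdxRight, List.getElem_append_right]

theorem IsSCover.refl (S : List α) : IsSCover S S := by
  refine isSCover_iff.2 ⟨List.Sublist.refl S, fun i => ⟨List.finRange S.length, ⟨?_, ?_⟩, ?_⟩⟩
  · exact (List.pairwise_lt_finRange _).isChain
  · exact List.map_get_finRange S
  · exact List.mem_finRange i

theorem IsSCover.append {C D U V : List α} (hC : IsSCover C U) (hD : IsSCover D V) :
    IsSCover (C ++ D) (U ++ V) := by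
  obtain ⟨hCU, hCcov⟩ := isSCover_iff.1 hC
  obtain ⟨hDV, hDcov⟩ := isSCover_iff.1 hD
  refine isSCover_iff.2 ⟨hCU.append hDV, fun i => ?_⟩
  by_cases hi : (i : ℕ) < U.length
  · obtain ⟨I, hI, hiI⟩ := hCcov ⟨i, hi⟩
    obtain ⟨J, hJ⟩ := hDV.exists_isOccurrence
    exact ⟨_, hI.append hJ, List.mem_append_left _ (List.mem_map.2 ⟨_, hiI, rfl⟩)⟩
  · have hi' : (i : ℕ) - U.length < V.length := by
      have := i.isLt
      simp only [List.length_append] at this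
      omega
    obtain ⟨I, hI⟩ := hCU.exists_isOccurrence
    obtain ⟨J, hJ, hiJ⟩ := hDcov ⟨i - U.length, hi'⟩
    refine ⟨_, hI.append hJ, List.mem_append_right _ (List.mem_map.2 ⟨_, hiJ, ?_⟩)⟩
    ext
    simp only [List.appendIdxRight]
    omega

theorem SPrimitive.of_isInfix {U S : List α} (hS : SPrimitive S) (hUS : U.IsInfix S) :
    SPrimitive U := by
  obtain ⟨P, Q, rfl⟩ := hUS
  intro C hC
  have := hS _ (((IsSCover.refl P).append hC).append (IsSCover.refl Q))
  simp only [List.length_append] at this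
  omega

theorem GammaSpec.length_le {γ : ℕ → ℕ} (hγ : GammaSpec γ) {S : List ℕ} {k : ℕ}
    (hS : SPrimitive S) (hk : S.toFinset.card ≤ k) : S.length ≤ γ k :=
  (hγ k).2 ⟨S, hk, hS, rfl⟩

theorem factor_contains_all_letters_general (γ : ℕ → ℕ) (hγ : GammaSpec γ)
    (S : List ℕ) (k : ℕ)
    (hprim : SPrimitive S) :
    ∀ P U Q : List ℕ, S = P ++ U ++ Q → U.length = γ (k - 1) + 1 →
      k ≤ U.toFinset.card := by
  intro P U Q hSplit hUlen
  by_contra! hfew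
  have hU : SPrimitive U := hprim.of_isInfix ⟨P, Q, hSplit.symm⟩
  have := hγ.length_le hU (k := k - 1) (by omega)
  omega

theorem factor_contains_all_letters (γ : ℕ → ℕ) (hγ : GammaSpec γ)
    (S : List ℕ) (k : ℕ) (hcard : S.toFinset.card = k)
    (hprim : SPrimitive S) (hlen : γ (k - 1) < S.length) :
    ∀ P U Q : List ℕ, S = P ++ U ++ Q → U.length = γ (k - 1) + 1 →
      k ≤ U.toFinset.card :=
  factor_contains_all_letters_general γ hγ S k hprim
end

section
/- For every k ≥ 2, γ(k) ≥ 2·γ(k-1) + 1, where γ(k) is the maximum length of an s-primitive word over a k-letter alphabet. -/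
open List

lemma coe_eq_map {N : ℕ} (I : List (Fin N)) :
    (do let a ← I; pure ((a : ℕ))) = List.map (fun a : Fin N => (a : ℕ)) I := by
  induction I with
  | nil => rfl
  | cons p J ih => simpa [List.flatMap_cons] using ih

lemma chainP {N : ℕ} {I : List (Fin N)} :
    I.Chain' (fun a b => (a : ℕ) < (b : ℕ)) ↔ I.Pairwise (fun a b : Fin N => (a : ℕ) < (b : ℕ)) := by
  show List.Chain' (· < ·) (do let a ← I; pure ((a:ℕ))) ↔ _
  rw [coe_eq_map]; simp only [List.Chain']; rw [List.isChain_iff_pairwise, List.pairwise_map]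

lemma Tget_left {S : List ℕ} {a : ℕ} (p : Fin (S ++ a :: S).length)
    (hp : (p : ℕ) < S.length) : (S ++ a :: S).get p = S.get ⟨p, hp⟩ := by
  simp [List.get_eq_getElem, List.getElem_append_left hp]

lemma Tget_mid {S : List ℕ} {a : ℕ} (p : Fin (S ++ a :: S).length)
    (hp : (p : ℕ) = S.length) : (S ++ a :: S).get p = a := by
  simp only [List.get_eq_getElem]
  rw [List.getElem_append_right (by omega)]
  simp [hp]

lemma Tget_right {S : List ℕ} {a : ℕ} (p : Fin (S ++ a :: S).length)
    (j : ℕ) (hj : j < S.length) (hp : (p : ℕ) = S.length + 1 + j) :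
    (S ++ a :: S).get p = S.get ⟨j, hj⟩ := by
  simp only [List.get_eq_getElem]
  rw [List.getElem_append_right (by omega)]
  have h1 : (p : ℕ) - S.length = j + 1 := by omega
  simp only [List.getElem_cons, h1]
  simp

lemma Tlen {S : List ℕ} {a : ℕ} : (S ++ a :: S).length = S.length + (S.length + 1) := by
  simp

lemma pmap_get_left {S : List ℕ} {a : ℕ} (J : List (Fin (S ++ a :: S).length))
    (H : ∀ p ∈ J, (p : ℕ) < S.length) :
    J.pmap (fun (p : Fin (S ++ a :: S).length) hp => S.get ⟨(p : ℕ), hp⟩) H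
      = J.map (S ++ a :: S).get := by
  induction J with
  | nil => rfl
  | cons p J ih =>
    have hp : (p : ℕ) < S.length := H p (List.mem_cons_self ..)
    simp only [List.pmap, List.map_cons, List.cons.injEq]
    exact ⟨(Tget_left p hp).symm, ih _⟩

lemma pmap_get_right {S : List ℕ} {a : ℕ} (J : List (Fin (S ++ a :: S).length))
    (H : ∀ p ∈ J, S.length < (p : ℕ))
    (H2 : ∀ p : Fin (S ++ a :: S).length, S.length < (p : ℕ) → (p : ℕ) - (S.length + 1) < S.length) :
    J.pmap (fun (p : Fin (S ++ a :: S).length) hp => S.get ⟨(p : ℕ) - (S.length + 1), H2 p hp⟩) H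
      = J.map (S ++ a :: S).get := by
  induction J with
  | nil => rfl
  | cons p J ih =>
    have hp : S.length < (p : ℕ) := H p (List.mem_cons_self ..)
    simp only [List.pmap, List.map_cons, List.cons.injEq]
    exact ⟨(Tget_right p _ (H2 p hp) (by omega)).symm, ih _⟩

/-- Splitting an occurrence of `C₁ ++ a :: C₂` in `S ++ a :: S` when `a ∉ S`. -/
lemma occ_split {S : List ℕ} {a : ℕ} (ha : a ∉ S) {C₁ C₂ : List ℕ}
    {I : List (Fin (S ++ a :: S).length)}
    (hchain : I.Chain' (fun p q => (p : ℕ) < (q : ℕ)))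
    (hmap : I.map (S ++ a :: S).get = C₁ ++ a :: C₂) :
    ∃ (I₁ I₂ : List (Fin S.length)),
      I₁.Chain' (fun p q => (p : ℕ) < (q : ℕ)) ∧
      I₂.Chain' (fun p q => (p : ℕ) < (q : ℕ)) ∧
      I₁.map S.get = C₁ ∧ I₂.map S.get = C₂ ∧
      (∀ i ∈ I, (hi : (i : ℕ) < S.length) → (⟨(i : ℕ), hi⟩ : Fin S.length) ∈ I₁) ∧
      (∀ i ∈ I, ∀ (j : ℕ) (hj : j < S.length), (i : ℕ) = S.length + 1 + j →
        (⟨j, hj⟩ : Fin S.length) ∈ I₂) := by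
  classical
  have hpair : I.Pairwise (fun p q : Fin (S ++ a :: S).length => (p : ℕ) < (q : ℕ)) :=
    chainP.mp hchain
  have hlenI : I.length = C₁.length + (C₂.length + 1) := by
    have := congrArg List.length hmap
    simpa using this
  have hIJ : I = I.take C₁.length ++ I.drop C₁.length := (List.take_append_drop _ _).symm
  have hrestlen : (I.drop C₁.length).length = C₂.length + 1 := by
    rw [List.length_drop, hlenI]; omega
  obtain ⟨m, J₂, hmJ₂⟩ : ∃ m J₂, I.drop C₁.length = m :: J₂ := by
    cases h : I.drop C₁.length with
    | nil => rw [h] at hrestlen; simp at hrestlen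
    | cons m J₂ => exact ⟨m, J₂, rfl⟩
  set J₁ := I.take C₁.length with hJ₁
  have hIsplit : I = J₁ ++ m :: J₂ := by rw [hIJ, hmJ₂]
  have hmapJ₁ : J₁.map (S ++ a :: S).get = C₁ := by
    have := congrArg (List.take C₁.length) hmap
    rw [← List.map_take] at this
    rw [hJ₁, this]
    exact List.take_left ..
  have hmaprest : (m :: J₂).map (S ++ a :: S).get = a :: C₂ := by
    have := congrArg (List.drop C₁.length) hmap
    rw [← List.map_drop, hmJ₂] at this
    rw [this]
    exact List.drop_left ..
  have hgm : (S ++ a :: S).get m = a := by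
    simpa using congrArg (·.headI) hmaprest
  have hmapJ₂ : J₂.map (S ++ a :: S).get = C₂ := by
    simpa using congrArg (·.tail) hmaprest
  have hmn : (m : ℕ) = S.length := by
    rcases lt_trichotomy (m : ℕ) S.length with h | h | h
    · exact absurd (hgm ▸ (Tget_left m h ▸ (S.get_mem _)) : a ∈ S) ha
    · exact h
    · have hml : (m : ℕ) < S.length + (S.length + 1) := Tlen ▸ m.isLt
      have hj : (m : ℕ) - (S.length + 1) < S.length := by omega
      have h2 : (S ++ a :: S).get m = S.get ⟨(m : ℕ) - (S.length + 1), hj⟩ :=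
        Tget_right m _ hj (by omega)
      exact absurd (hgm ▸ (h2 ▸ (S.get_mem _)) : a ∈ S) ha
  rw [hIsplit, List.pairwise_append] at hpair
  obtain ⟨hp₁, hp₂', hcross⟩ := hpair
  rw [List.pairwise_cons] at hp₂'
  obtain ⟨hmlt, hp₂⟩ := hp₂'
  have hJ₁lt : ∀ p ∈ J₁, (p : ℕ) < S.length := fun p hp =>
    hmn ▸ hcross p hp m (List.mem_cons_self ..)
  have hJ₂gt : ∀ p ∈ J₂, S.length < (p : ℕ) := fun p hp => hmn ▸ hmlt p hp
  have hsubBound : ∀ p : Fin (S ++ a :: S).length, S.length < (p : ℕ) →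
      (p : ℕ) - (S.length + 1) < S.length := by
    intro p hp
    have h := lt_of_lt_of_eq p.isLt Tlen
    omega
  refine ⟨J₁.pmap (fun (p : Fin (S ++ a :: S).length) hp => (⟨(p : ℕ), hp⟩ : Fin S.length)) hJ₁lt,
    J₂.pmap (fun (p : Fin (S ++ a :: S).length) hp => (⟨(p : ℕ) - (S.length + 1),
      hsubBound p hp⟩ : Fin S.length)) hJ₂gt, ?_, ?_, ?_, ?_, ?_, ?_⟩
  · rw [chainP, List.pairwise_pmap]
    exact hp₁.imp_of_mem (fun _ _ h => fun _ _ => h)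
  · rw [chainP, List.pairwise_pmap]
    refine hp₂.imp_of_mem (fun hx hy h => fun h₁ h₂ => ?_)
    simpa using by omega
  · rw [List.map_pmap, ← hmapJ₁]
    exact pmap_get_left J₁ hJ₁lt
  · rw [List.map_pmap, ← hmapJ₂]
    exact pmap_get_right J₂ hJ₂gt hsubBound
  · intro i hi hilt
    rw [hIsplit] at hi
    rcases List.mem_append.mp hi with h | h
    · exact List.mem_pmap.mpr ⟨i, h, rfl⟩
    · rcases List.mem_cons.mp h with h | h
      · exfalso; rw [h] at hilt; omega
      · exfalso; have := hJ₂gt i h; omega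
  · intro i hi j hj hij
    rw [hIsplit] at hi
    rcases List.mem_append.mp hi with h | h
    · exfalso; have := hJ₁lt i h; omega
    · rcases List.mem_cons.mp h with h | h
      · exfalso; rw [h] at hij; omega
      · refine List.mem_pmap.mpr ⟨i, h, ?_⟩
        apply Fin.ext
        simp only []
        omega

lemma sprim_glue {S : List ℕ} {a : ℕ} (ha : a ∉ S) (hS : SPrimitive S) :
    SPrimitive (S ++ a :: S) := by
  classical
  intro C hC
  obtain ⟨hsub, hcov⟩ := hC
  have hpn : S.length < (S ++ a :: S).length := by rw [Tlen]; omega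
  obtain ⟨I, hch, hmem, hmap⟩ := hcov ⟨S.length, hpn⟩
  have haC : a ∈ C := by
    rw [← hmap]
    exact List.mem_map.mpr ⟨⟨S.length, hpn⟩, hmem, Tget_mid _ rfl⟩
  obtain ⟨C₁, C₂, hCsplit⟩ := List.append_of_mem haC
  subst hCsplit
  obtain ⟨I₁, I₂, hch₁, hch₂, hmap₁, hmap₂, _, _⟩ := occ_split ha hch hmap
  have hsub₁ : C₁.Sublist S := by
    rw [← hmap₁]
    exact List.map_getElem_sublist (chainP.mp hch₁)
  have hsub₂ : C₂.Sublist S := by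
    rw [← hmap₂]
    exact List.map_getElem_sublist (chainP.mp hch₂)
  have hcov₁ : ∀ i : Fin S.length, ∃ I' : List (Fin S.length),
      I'.Chain' (fun p q => (p : ℕ) < (q : ℕ)) ∧ i ∈ I' ∧ I'.map S.get = C₁ := by
    intro i
    have hilt : (i : ℕ) < (S ++ a :: S).length := by rw [Tlen]; omega
    obtain ⟨J, hchJ, hmemJ, hmapJ⟩ := hcov ⟨i, hilt⟩
    obtain ⟨I₁', _, hch₁', _, hmap₁', _, hfst, _⟩ := occ_split ha hchJ hmapJ
    exact ⟨I₁', hch₁', by simpa using hfst ⟨i, hilt⟩ hmemJ i.isLt, hmap₁'⟩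
  have hcov₂ : ∀ i : Fin S.length, ∃ I' : List (Fin S.length),
      I'.Chain' (fun p q => (p : ℕ) < (q : ℕ)) ∧ i ∈ I' ∧ I'.map S.get = C₂ := by
    intro i
    have hilt : S.length + 1 + (i : ℕ) < (S ++ a :: S).length := by rw [Tlen]; omega
    obtain ⟨J, hchJ, hmemJ, hmapJ⟩ := hcov ⟨S.length + 1 + i, hilt⟩
    obtain ⟨_, I₂', _, hch₂', _, hmap₂', _, hsnd⟩ := occ_split ha hchJ hmapJ
    exact ⟨I₂', hch₂', hsnd ⟨S.length + 1 + i, hilt⟩ hmemJ i i.isLt rfl, hmap₂'⟩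
  have h₁ : S.length ≤ C₁.length := hS C₁ ⟨hsub₁, hcov₁⟩
  have h₂ : S.length ≤ C₂.length := hS C₂ ⟨hsub₂, hcov₂⟩
  rw [Tlen]
  simp only [List.length_append, List.length_cons]
  omega

theorem gamma_lower_bound (γ : ℕ → ℕ) (hγ : GammaSpec γ) (k : ℕ) (hk : 2 ≤ k) :
    2 * γ (k - 1) + 1 ≤ γ k := by
  obtain ⟨S, hcard, hprim, hlen⟩ := (hγ (k - 1)).1
  obtain ⟨a, haF⟩ := Infinite.exists_notMem_finset S.toFinset
  have ha : a ∉ S := fun h => haF (List.mem_toFinset.mpr h)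
  apply (hγ k).2
  refine ⟨S ++ a :: S, ?_, sprim_glue ha hprim, ?_⟩
  · have h1 : (S ++ a :: S).toFinset = insert a S.toFinset := by
      simp [List.toFinset_append]
    rw [h1]
    have := Finset.card_insert_le a S.toFinset
    omega
  · simp [hlen]; omega
end
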